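/- arXiv:0910.4044 — 7 statements merged into one kernel-verified Lean document; each statement's English description precedes it below -/
import Mathlib

section
/- Let a, b, c, b∧, b∧', c∧, b∨, b∨', c∨ be Booleans satisfying: b∧ XOR b∧' = b; c∧ = b∧' if c is true and c∧ = b∧ if c is false; b∨ XOR b∨' = NOT b; c∨ = b∨ if c is true and c∨ = b∨' if c is false. Then the value announced by judge A, namely NOT (b∨ XOR c∨) if a is true and b∧ XOR c∧ if a is false, equals maj3(a,b,c). In other words, the three-judges protocol correctly computes the majority verdict. -/
/-- `maj3 a b c` is true iff at least two of `a`, `b`, `c` are true. -/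
def maj3 (a b c : Bool) : Bool := (a && b) || (b && c) || (a && c)

/-- Functional correctness of the McIver–Morgan three-judges protocol: the value announced
by judge A equals the majority of the three decisions. -/
theorem three_judges_correct (a b c bAnd bAnd' cAnd bOr bOr' cOr : Bool)
    (hAndShare : xor bAnd bAnd' = b)
    (hAndSel : cAnd = if c then bAnd' else bAnd)
    (hOrShare : xor bOr bOr' = !b)
    (hOrSel : cOr = if c then bOr else bOr') :
    (if a then !(xor bOr cOr) else xor bAnd cAnd) = maj3 a b c := by subst hAndSel hOrSel; cases a <;> cases b <;> cases c <;> simp_all [maj3]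
end

section
/- Fix n ≥ 1 and consider Boolean functions on 2n inputs, i.e., elements of (Fin (2n) → Bool) → Bool, with the pointwise lattice structure (pointwise AND as meet and pointwise OR as join). Let G be the set consisting of, for each i ∈ Fin n, the function d ↦ d(2i) AND d(2i+1) and the function d ↦ d(2i) OR d(2i+1) (the pairwise conjunctions and disjunctions over the n disjoint pairs of inputs). Then both threshold functions Th_{≥ n+1} (true iff at least n+1 of the 2n inputs are true) and Th_{≥ n} (true iff at least n of the 2n inputs are true) belong to the lattice closure of G, i.e., they can be constructed from G by finitely many pointwise conjunctions and disjunctions. -/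
/-!
Write `aᵢ = d(2i) ∧ d(2i+1)` and `oᵢ = d(2i) ∨ d(2i+1)`. Since `[x ∧ y] + [x ∨ y] = [x] + [y]`,
the number of true inputs of `d` equals the number of true values among the `2n` generators
`aᵢ, oᵢ`. Hence `Th_{≥k}(d) = Th_{≥k}(a, o)`, and for `1 ≤ k ≤ 2n` the threshold function on the
`2n` generators is the monotone DNF `⋁_{|S| = k} ⋀_{s ∈ S} s`, a lattice expression in them.
-/

open Finset

def threshold {ι : Type*} [Fintype ι] (k : ℕ) (d : ι → Bool) : Bool :=
  decide (k ≤ #{i | d i = true})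

section Threshold

variable {ι : Type*} [Fintype ι]

theorem threshold_eq_sup_inf (k : ℕ) :
    threshold (ι := ι) k = (powersetCard k univ).sup fun s => s.inf fun i d => d i := by
  funext d
  rw [Bool.eq_iff_iff, threshold, decide_eq_true_iff, Finset.sup_apply,
    le_card_iff_exists_subset_card]
  refine Iff.trans ?_ Finset.sup_eq_top_iff.symm
  simp only [Finset.inf_apply, Finset.inf_eq_top_iff]
  simp [subset_iff, and_comm]

theorem threshold_mem_latticeClosure {k : ℕ} (hk₀ : 1 ≤ k) (hk : k ≤ Fintype.card ι) :
    threshold k ∈ latticeClosure (Set.range fun i (d : ι → Bool) => d i) := by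
  rw [threshold_eq_sup_inf]
  refine isSublattice_latticeClosure.supClosed.finsetSup_mem
    (powersetCard_nonempty.2 (by simpa)) fun s hs => ?_
  refine isSublattice_latticeClosure.infClosed.finsetInf_mem ?_
    fun i _ => subset_latticeClosure ⟨i, rfl⟩
  rw [← card_pos, (mem_powersetCard.1 hs).2]
  omega

end Threshold

theorem comp_mem_latticeClosure {α β γ : Type*} [Lattice γ] {S : Set (β → γ)} {f : β → γ}
    (hf : f ∈ latticeClosure S) (φ : α → β) :
    f ∘ φ ∈ latticeClosure ((· ∘ φ) '' S) :=
  image_latticeClosure S (· ∘ φ) (fun _ _ => rfl) (fun _ _ => rfl) ▸ Set.mem_image_of_mem _ hf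

theorem card_filter_and_add_card_filter_or {ι : Type*} [Fintype ι] (x y : ι → Bool) :
    #{i | (x i && y i) = true} + #{i | (x i || y i) = true} =
      #{i | x i = true} + #{i | y i = true} := by
  classical
  simp only [Bool.and_eq_true, Bool.or_eq_true, filter_and, filter_or]
  rw [add_comm, card_union_add_card_inter]

theorem card_filter_sumElim {α β : Type*} [Fintype α] [Fintype β] (x : α → Bool)
    (y : β → Bool) :
    #{j | Sum.elim x y j = true} = #{i | x i = true} + #{i | y i = true} := by
  simp only [card_filter, Fintype.sum_sum_type, Sum.elim_inl, Sum.elim_inr]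
  rfl

theorem Fin.sum_univ_two_mul {M : Type*} [AddCommMonoid M] {n : ℕ} (f : Fin (2 * n) → M) :
    ∑ j, f j = ∑ i : Fin n, (f ⟨2 * i, by omega⟩ + f ⟨2 * i + 1, by omega⟩) := by
  rw [← (finProdFinEquiv.trans (finCongr (Nat.mul_comm n 2))).sum_comp, Fintype.sum_prod_type]
  refine sum_congr rfl fun i _ => ?_
  rw [Fin.sum_univ_two]
  congr 2 <;> ext <;>
    simp only [Equiv.trans_apply, finProdFinEquiv_apply_val, finCongr_apply, Fin.val_cast] <;>
    omega

theorem card_filter_fin_two_mul {n : ℕ} (d : Fin (2 * n) → Bool) :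
    #{j | d j = true} =
      #{i : Fin n | d ⟨2 * i, by omega⟩ = true} +
        #{i : Fin n | d ⟨2 * i + 1, by omega⟩ = true} := by
  simp only [card_filter, Fin.sum_univ_two_mul, sum_add_distrib]

section Pairs

variable {n : ℕ}

def pairAnd (i : Fin n) (d : Fin (2 * n) → Bool) : Bool :=
  d ⟨2 * i, by omega⟩ && d ⟨2 * i + 1, by omega⟩

def pairOr (i : Fin n) (d : Fin (2 * n) → Bool) : Bool :=
  d ⟨2 * i, by omega⟩ || d ⟨2 * i + 1, by omega⟩

def pairAndOr (d : Fin (2 * n) → Bool) : Fin n ⊕ Fin n → Bool :=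
  Sum.elim (pairAnd · d) (pairOr · d)

theorem card_filter_pairAndOr (d : Fin (2 * n) → Bool) :
    #{j | pairAndOr d j = true} = #{j | d j = true} := by
  rw [pairAndOr, card_filter_sumElim]
  unfold pairAnd pairOr
  rw [card_filter_and_add_card_filter_or, card_filter_fin_two_mul]

theorem threshold_comp_pairAndOr (k : ℕ) :
    threshold k ∘ pairAndOr = threshold (ι := Fin (2 * n)) k :=
  funext fun d => by rw [Function.comp_apply, threshold, threshold, card_filter_pairAndOr]

theorem threshold_mem_latticeClosure_pairAndOr {k : ℕ} (hk₀ : 1 ≤ k) (hk : k ≤ 2 * n) :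
    threshold k ∈ latticeClosure (Set.range (pairAnd (n := n)) ∪ Set.range pairOr) := by
  rw [← threshold_comp_pairAndOr]
  refine latticeClosure_mono ?_ (comp_mem_latticeClosure
    (threshold_mem_latticeClosure hk₀ (by simpa [two_mul] using hk)) pairAndOr)
  rintro _ ⟨_, ⟨i | i, rfl⟩, rfl⟩
  exacts [Or.inl ⟨i, rfl⟩, Or.inr ⟨i, rfl⟩]

end Pairs

/-- Both threshold functions `Th_{≥ n+1}` and `Th_{≥ n}` on `2n` Boolean inputs lie in the
lattice closure (closure under pointwise AND/OR) of the set of pairwise conjunctions and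
disjunctions over the `n` disjoint pairs of inputs. -/
theorem thresholds_in_lattice_closure (n : ℕ) (hn : 1 ≤ n)
    (G : Set ((Fin (2 * n) → Bool) → Bool))
    (hG : G = {f | ∃ i : Fin n,
      f = (fun d => d ⟨2 * i.val, by have := i.isLt; omega⟩ &&
                    d ⟨2 * i.val + 1, by have := i.isLt; omega⟩) ∨
      f = (fun d => d ⟨2 * i.val, by have := i.isLt; omega⟩ ||
                    d ⟨2 * i.val + 1, by have := i.isLt; omega⟩)}) :
    (fun d : Fin (2 * n) → Bool =>
        decide (n + 1 ≤ (Finset.univ.filter fun i => d i = true).card)) ∈ latticeClosure G ∧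
    (fun d : Fin (2 * n) → Bool =>
        decide (n ≤ (Finset.univ.filter fun i => d i = true).card)) ∈ latticeClosure G := by
  have hG' : Set.range (pairAnd (n := n)) ∪ Set.range pairOr ⊆ G := by
    rintro _ (⟨i, rfl⟩ | ⟨i, rfl⟩)
    exacts [hG ▸ ⟨i, Or.inl rfl⟩, hG ▸ ⟨i, Or.inr rfl⟩]
  exact ⟨latticeClosure_mono hG' (threshold_mem_latticeClosure_pairAndOr (by omega) (by omega)),
    latticeClosure_mono hG' (threshold_mem_latticeClosure_pairAndOr hn (by omega))⟩
end

section
/- Fix n ≥ 0. Let s : Fin (2n+1) → ZMod (2n+2) be the shared secrets and d : Fin (2n+1) → Bool the judges' decisions, and for each i ∈ Fin (2n+1) let the announcement of judge i be a i = s i − s (i − 1) + (d i).toNat, computed in ZMod (2n+2), where i − 1 is taken cyclically in Fin (2n+1). Then the sum of all announcements ∑ i, a i in ZMod (2n+2) equals the image of ∑ i, (d i).toNat in ZMod (2n+2); moreover, since ∑ i, (d i).toNat ≤ 2n+1 < 2n+2, the canonical representative (ZMod.val) of ∑ i, a i equals the natural number ∑ i, (d i).toNat. Hence the DCP-based protocol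 correctly reveals the exact number of judges who voted 'guilty'. -/
/-- Correctness of the DCP-based protocol: with cyclic shared secrets `s i` in `ZMod (2n+2)`
and announcements `a i = s i − s (i−1) + (d i).toNat`, the sum of all announcements equals
the number of 'guilty' votes, both in `ZMod (2n+2)` and, via `ZMod.val`, as a natural number. -/
theorem dcp_protocol_correct (n : ℕ)
    (s : Fin (2 * n + 1) → ZMod (2 * n + 2))
    (d : Fin (2 * n + 1) → Bool)
    (a : Fin (2 * n + 1) → ZMod (2 * n + 2))
    (ha : ∀ i, a i = s i - s (i - 1) + ((d i).toNat : ZMod (2 * n + 2))) :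
    (∑ i, a i) = ((∑ i, (d i).toNat : ℕ) : ZMod (2 * n + 2)) ∧
    (∑ i, a i).val = ∑ i, (d i).toNat := by
  have hsum : (∑ i, a i) = ((∑ i, (d i).toNat : ℕ) : ZMod (2 * n + 2)) := by
    simp only [ha]
    push_cast
    rw [Finset.sum_add_distrib, Finset.sum_sub_distrib]
    have : (∑ i, s (i - 1)) = ∑ i, s i :=
      Fintype.sum_equiv (Equiv.subRight (1 : Fin (2 * n + 1))) _ _ (fun i => rfl)
    rw [this]
    ring
  refine ⟨hsum, ?_⟩
  rw [hsum, ZMod.val_natCast_of_lt]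
  calc (∑ i, (d i).toNat) ≤ ∑ _i : Fin (2 * n + 1), 1 :=
        Finset.sum_le_sum (fun i _ => Bool.toNat_le _)
    _ < 2 * n + 2 := by simp
end

section
/- Let R be a commutative ring (in particular R = ZMod q for a prime q), let m be a natural number, and let x : Fin m → R. For each i ∈ Fin m define y i = (∑_{j < i} x j) − (∑_{j > i} x j), where the sums range over indices of Fin m strictly below, respectively strictly above, i. Then ∑_{i} x i * y i = 0. -/
theorem aux_swap (R : Type*) [CommRing R] (m : ℕ) (x : Fin m → R) :
    ∑ i, ∑ j ∈ Finset.Iio i, x i * x j = ∑ i, ∑ j ∈ Finset.Ioi i, x i * x j := by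
  rw [Finset.sum_sigma', Finset.sum_sigma']
  apply Finset.sum_nbij' (fun p => ⟨p.2, p.1⟩) (fun p => ⟨p.2, p.1⟩) <;>
    simp [Finset.mem_Iio, Finset.mem_Ioi, mul_comm]

/-- Key algebraic identity of the Anonymous Veto Network: with
`y i = ∑_{j < i} x j − ∑_{j > i} x j`, the exponents `N i = x i * y i` sum to zero. -/
theorem av_net_exponents_sum_zero (R : Type*) [CommRing R] (m : ℕ)
    (x y : Fin m → R)
    (hy : ∀ i, y i = (∑ j ∈ Finset.Iio i, x j) - (∑ j ∈ Finset.Ioi i, x j)) :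
    ∑ i, x i * y i = 0 := by
  simp only [hy, mul_sub, Finset.mul_sum, Finset.sum_sub_distrib]
  rw [aux_swap]
  ring
end

section
/- Let G be a commutative group, g ∈ G, and let q be a positive natural number such that g has order q (orderOf g = q). Let m be a natural number and x : Fin m → ZMod q, and for each i define y i = (∑_{j < i} x j) − (∑_{j > i} x j) in ZMod q. Then ∏_{i} g ^ (x i * y i).val = 1, i.e., the product of the published values g^{N_i} with N_i = x_i y_i equals the identity. -/
open Finset

/-- Both sides are the sum of `x i * x j` over the pairs `j < i`. -/
theorem Finset.sum_mul_sum_Iio_eq_sum_mul_sum_Ioi {ι R : Type*} [LinearOrder ι] [Fintype ι]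
    [LocallyFiniteOrderBot ι] [LocallyFiniteOrderTop ι] [CommSemiring R] (x : ι → R) :
    ∑ i, x i * ∑ j ∈ Iio i, x j = ∑ i, x i * ∑ j ∈ Ioi i, x j := by
  simp only [mul_sum]
  calc ∑ i, ∑ j ∈ Iio i, x i * x j = ∑ j, ∑ i ∈ Ioi j, x i * x j :=
        sum_comm' fun i j ↦ by simp only [mem_univ, mem_Iio, mem_Ioi, true_and, and_true]
    _ = ∑ j, ∑ i ∈ Ioi j, x j * x i := by simp only [mul_comm]

theorem Finset.sum_mul_sum_Iio_sub_sum_Ioi_eq_zero {ι R : Type*} [LinearOrder ι] [Fintype ι]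
    [LocallyFiniteOrderBot ι] [LocallyFiniteOrderTop ι] [CommRing R] (x : ι → R) :
    ∑ i, x i * (∑ j ∈ Iio i, x j - ∑ j ∈ Ioi i, x j) = 0 := by
  simp only [mul_sub, sum_sub_distrib, sum_mul_sum_Iio_eq_sum_mul_sum_Ioi, sub_self]

theorem prod_pow_val_eq_pow_val_sum {G ι : Type*} [CommMonoid G] {g : G} {q : ℕ} [NeZero q]
    (hg : orderOf g = q) (s : Finset ι) (a : ι → ZMod q) :
    ∏ i ∈ s, g ^ (a i).val = g ^ (∑ i ∈ s, a i).val := by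
  rw [prod_pow_eq_pow_sum]
  refine pow_eq_pow_of_modEq ?_ (hg ▸ pow_orderOf_eq_one g)
  rw [← ZMod.natCast_eq_natCast_iff]
  push_cast
  simp only [ZMod.natCast_val, ZMod.cast_id', id]

/-- Step 1 of the appendix protocol: the product of the published values `g^{N_i}` with
`N_i = x_i y_i` equals the identity, where `y i = ∑_{j < i} x j − ∑_{j > i} x j` in `ZMod q`
and `g` has order `q`. -/
theorem av_net_product_one (G : Type*) [CommGroup G] (g : G) (q : ℕ) (hq : 0 < q)
    (horder : orderOf g = q) (m : ℕ) (x y : Fin m → ZMod q)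
    (hy : ∀ i, y i = (∑ j ∈ Finset.Iio i, x j) - (∑ j ∈ Finset.Ioi i, x j)) :
    ∏ i, g ^ (x i * y i).val = 1 := by
  have : NeZero q := ⟨hq.ne'⟩
  rw [prod_pow_val_eq_pow_val_sum horder, funext hy, sum_mul_sum_Iio_sub_sum_Ioi_eq_zero,
    ZMod.val_zero, pow_zero]
end

section
/- Let G be a commutative group, g ∈ G with orderOf g = q for a positive natural number q, and let m be a natural number. Let N : Fin m → ZMod q with ∑_i N i = 0, let v : Fin m → ZMod q, and let X ∈ ZMod q. Then ∏_{i} g ^ ((N i + v i) * X).val = g ^ ((∑_i v i) * X).val. In particular, in Step 3 of the appendix protocol the product of all announced values equals g raised to (∑ v_i)·X, where X is the product of all secret exponents. -/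
lemma pow_val_add {G : Type*} [CommGroup G] (g : G) (q : ℕ) (hq : 0 < q)
    (horder : orderOf g = q) (a b : ZMod q) :
    g ^ (a + b).val = g ^ a.val * g ^ b.val := by
  subst horder
  haveI : NeZero (orderOf g) := ⟨hq.ne'⟩
  rw [ZMod.val_add, ← pow_add, pow_mod_orderOf]

lemma pow_val_sum {G : Type*} [CommGroup G] (g : G) (q : ℕ) (hq : 0 < q)
    (horder : orderOf g = q) {ι : Type*} (s : Finset ι) (f : ι → ZMod q) :
    ∏ i ∈ s, g ^ (f i).val = g ^ (∑ i ∈ s, f i).val := by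
  haveI : NeZero q := ⟨hq.ne'⟩
  induction s using Finset.cons_induction with
  | empty => simp [ZMod.val_zero]
  | cons a s ha ih =>
      rw [Finset.prod_cons, Finset.sum_cons, pow_val_add g q hq horder, ih]

/-- Step 3 of the appendix protocol: since the nonces `N i` sum to zero in `ZMod q`, the
product of the announced values `g^{(N_i + v_i)X}` equals `g^{(∑ v_i)X}`. -/
theorem appendix_step3_product (G : Type*) [CommGroup G] (g : G) (q : ℕ) (hq : 0 < q)
    (horder : orderOf g = q) (m : ℕ) (N v : Fin m → ZMod q) (X : ZMod q)
    (hN : ∑ i, N i = 0) :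
    ∏ i, g ^ (((N i + v i) * X).val) = g ^ (((∑ i, v i) * X).val) := by
  rw [pow_val_sum g q hq horder]
  congr 1
  rw [← Finset.sum_mul, Finset.sum_add_distrib, hN, zero_add]
end

section
/- Fix n ≥ 1 and let d : Fin (2n+1) → Bool with v = ∑_k (d k).toNat, and let i, j ∈ Fin (2n+1) with i ≠ j. If 0 < v − (d i).toNat and v − (d i).toNat < 2n (i.e., the count of 'guilty' votes among the 2n judges other than i is strictly between 0 and 2n), then there exists d' : Fin (2n+1) → Bool such that d' i = d i, ∑_k (d' k).toNat = v, and d' j = NOT (d j). Hence judge j's decision cannot be deduced by judge i from the announced count and i's own decision: both values of d j are compatible with i's observations. -/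
/-! Among the `2n` judges other than `i` there are both guilty and innocent votes, so some judge
`k ≠ i` voted differently from `j`. Exchanging the votes of `j` and `k` keeps `i`'s vote and the
total count, and flips `j`'s vote. -/

open Finset

theorem Finset.exists_ne_of_sum_toNat_pos_of_lt_card {α : Type*} {s : Finset α} {f : α → Bool}
    {j : α} (hj : j ∈ s) (hpos : 0 < ∑ k ∈ s, (f k).toNat)
    (hlt : ∑ k ∈ s, (f k).toNat < #s) :
    ∃ k ∈ s, f k ≠ f j := by
  by_contra! hconst
  have hsum : ∑ k ∈ s, (f k).toNat = #s * (f j).toNat := by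
    rw [sum_congr rfl fun k hk => congrArg Bool.toNat (hconst k hk), sum_const, smul_eq_mul]
  have hne : s.Nonempty := ⟨j, hj⟩
  cases f j <;> simp_all

theorem dcp_conditional_anonymity_general (n : ℕ) (d : Fin (2 * n + 1) → Bool) (v : ℕ)
    (hv : v = ∑ k, (d k).toNat) (i j : Fin (2 * n + 1)) (hij : i ≠ j)
    (hlow : 0 < v - (d i).toNat) (hhigh : v - (d i).toNat < 2 * n) :
    ∃ d' : Fin (2 * n + 1) → Bool,
      d' i = d i ∧ (∑ k, (d' k).toNat) = v ∧ d' j = !(d j) := by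
  have hothers : ∑ k ∈ univ.erase i, (d k).toNat = v - (d i).toNat := by
    have := add_sum_erase univ (fun k => (d k).toNat) (mem_univ i)
    omega
  have hcard : #(univ.erase i) = 2 * n := by simp
  obtain ⟨k, hk, hdk⟩ := exists_ne_of_sum_toNat_pos_of_lt_card
    (mem_erase.2 ⟨hij.symm, mem_univ j⟩) (hothers ▸ hlow) (by rwa [hothers, hcard])
  have hki : i ≠ k := (ne_of_mem_erase hk).symm
  refine ⟨d ∘ Equiv.swap j k, ?_, ?_, ?_⟩
  · simp [Equiv.swap_apply_of_ne_of_ne hij hki]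
  · rw [hv]
    exact Equiv.sum_comp (Equiv.swap j k) fun k => (d k).toNat
  · simpa using Bool.eq_not_of_ne hdk

/-- Conditional anonymity of the DCP-based protocol: if the count of 'guilty' votes among the
judges other than `i` is strictly between `0` and `2n`, then for any other judge `j` there is
an alternative decision vector with the same decision of `i`, the same total count, and `j`'s
decision flipped; hence `i` cannot deduce `j`'s decision. -/
theorem dcp_conditional_anonymity (n : ℕ) (hn : 1 ≤ n) (d : Fin (2 * n + 1) → Bool) (v : ℕ)
    (hv : v = ∑ k, (d k).toNat) (i j : Fin (2 * n + 1)) (hij : i ≠ j)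
    (hlow : 0 < v - (d i).toNat) (hhigh : v - (d i).toNat < 2 * n) :
    ∃ d' : Fin (2 * n + 1) → Bool,
      d' i = d i ∧ (∑ k, (d' k).toNat) = v ∧ d' j = !(d j) :=
  dcp_conditional_anonymity_general n d v hv i j hij hlow hhigh
end
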